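/- Let D1 and D2 be strongly connected digraphs with rad(D1) = rad(D2), radii taken with respect to the maximum distance. Then Ecc(D1 ⊠ D2) = (Ecc(D1) × V(D2)) ∪ (V(D1) × Ecc(D2)). -/
import Mathlib


/-- A digraph on a vertex type `V`: a set of directed edges (ordered pairs of
distinct vertices), i.e. an irreflexive adjacency relation (no loops, and no
parallel edges since edges form a set). -/
structure Digr (V : Type*) where
  Adj : V → V → Prop
  loopless : ∀ v, ¬ Adj v v

namespace Digr

variable {V : Type*} {W : Type*}

/-- `D.Reaches u v` : there is a directed path (walk) from `u` to `v`. -/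
def Reaches (D : Digr V) (u v : V) : Prop :=
  ∃ (n : ℕ) (f : Fin (n + 1) → V), f 0 = u ∧ f (Fin.last n) = v ∧
    ∀ i : Fin n, D.Adj (f i.castSucc) (f i.succ)

/-- A digraph is strongly connected if every vertex reaches every vertex. -/
def StronglyConnected (D : Digr V) : Prop := ∀ u v : V, D.Reaches u v

/-- The directed distance `→d(u,v)`: the length of a shortest directed
`u`–`v` path. -/
noncomputable def ddist (D : Digr V) (u v : V) : ℕ :=
  sInf {n : ℕ | ∃ f : Fin (n + 1) → V, f 0 = u ∧ f (Fin.last n) = v ∧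
    ∀ i : Fin n, D.Adj (f i.castSucc) (f i.succ)}

/-- The maximum distance `md(u,v) = max {→d(u,v), →d(v,u)}`. -/
noncomputable def mdist (D : Digr V) (u v : V) : ℕ :=
  max (D.ddist u v) (D.ddist v u)

/-- The eccentricity of a vertex with respect to the maximum distance. -/
noncomputable def ecc [Fintype V] (D : Digr V) (u : V) : ℕ :=
  Finset.univ.sup fun v => D.mdist u v

/-- The radius with respect to the maximum distance. -/
noncomputable def rad [Fintype V] [Nonempty V] (D : Digr V) : ℕ :=
  Finset.univ.inf' Finset.univ_nonempty fun v => D.ecc v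

/-- The diameter with respect to the maximum distance. -/
noncomputable def diam [Fintype V] (D : Digr V) : ℕ :=
  Finset.univ.sup fun v => D.ecc v

/-- Out-neighbourhood. -/
def outNbhd (D : Digr V) (v : V) : Set V := {u | D.Adj v u}

/-- In-neighbourhood. -/
def inNbhd (D : Digr V) (v : V) : Set V := {u | D.Adj u v}

/-- Neighbourhood `N(v) = N⁺(v) ∪ N⁻(v)`. -/
def nbhd (D : Digr V) (v : V) : Set V := D.outNbhd v ∪ D.inNbhd v

/-- Closed neighbourhood `N[v] = N(v) ∪ {v}`. -/
def closedNbhd (D : Digr V) (v : V) : Set V := D.nbhd v ∪ {v}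

/-- The boundary `∂(D)`. -/
noncomputable def boundary (D : Digr V) : Set V :=
  {v | ∃ u : V, ∀ w ∈ D.nbhd v, D.mdist u w ≤ D.mdist u v}

/-- The contour `Ct(D)`. -/
noncomputable def contour [Fintype V] (D : Digr V) : Set V :=
  {v | ∀ u ∈ D.nbhd v, D.ecc u ≤ D.ecc v}

/-- The eccentricity set `Ecc(D)`. -/
noncomputable def eccSet [Fintype V] (D : Digr V) : Set V :=
  {v | ∃ u : V, D.ecc u = D.mdist u v}

/-- The periphery `Per(D) = {v : ecc(v) = diam(D)}`. -/
noncomputable def periphery [Fintype V] (D : Digr V) : Set V :=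
  {v | D.ecc v = D.diam}

/-- The strong product of two digraphs. -/
def strongProd (D₁ : Digr V) (D₂ : Digr W) : Digr (V × W) where
  Adj p q :=
    (D₁.Adj p.1 q.1 ∧ p.2 = q.2) ∨ (p.1 = q.1 ∧ D₂.Adj p.2 q.2) ∨
      (D₁.Adj p.1 q.1 ∧ D₂.Adj p.2 q.2)
  loopless := by
    rintro ⟨a, b⟩ (⟨h, -⟩ | ⟨-, h⟩ | ⟨h, -⟩)
    · exact D₁.loopless a h
    · exact D₂.loopless b h
    · exact D₁.loopless a h

/-- walk via ℕ-indexed function -/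
def Walk' (D : Digr V) (n : ℕ) (u v : V) : Prop :=
  ∃ f : ℕ → V, f 0 = u ∧ f n = v ∧ ∀ i < n, D.Adj (f i) (f (i+1))

lemma walk'_of_fin (D : Digr V) {n : ℕ} {u v : V}
    (h : ∃ f : Fin (n + 1) → V, f 0 = u ∧ f (Fin.last n) = v ∧
      ∀ i : Fin n, D.Adj (f i.castSucc) (f i.succ)) : D.Walk' n u v := by
  obtain ⟨f, h0, hl, hs⟩ := h
  refine ⟨fun i => f ⟨min i n, by omega⟩, by simpa using h0, by simpa [Fin.last] using hl, ?_⟩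
  intro i hi
  have := hs ⟨i, hi⟩
  have e1 : min i n = i := by omega
  have e2 : min (i+1) n = i+1 := by omega
  simp only [e1, e2]
  exact this

lemma fin_of_walk' (D : Digr V) {n : ℕ} {u v : V} (h : D.Walk' n u v) :
    ∃ f : Fin (n + 1) → V, f 0 = u ∧ f (Fin.last n) = v ∧
      ∀ i : Fin n, D.Adj (f i.castSucc) (f i.succ) := by
  obtain ⟨g, h0, hl, hs⟩ := h
  exact ⟨fun i => g i.val, h0, hl, fun i => hs i.val i.isLt⟩

lemma ddist_le' (D : Digr V) {n : ℕ} {u v : V} (h : D.Walk' n u v) :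
    D.ddist u v ≤ n := Nat.sInf_le (D.fin_of_walk' h)

lemma walk'_ddist (D : Digr V) {u v : V} (h : D.Reaches u v) :
    D.Walk' (D.ddist u v) u v := by
  obtain ⟨n, hn⟩ := h
  have hne : {m : ℕ | ∃ f : Fin (m + 1) → V, f 0 = u ∧ f (Fin.last m) = v ∧
      ∀ i : Fin m, D.Adj (f i.castSucc) (f i.succ)}.Nonempty := ⟨n, hn⟩
  exact D.walk'_of_fin (Nat.sInf_mem hne)

lemma walk'_refl (D : Digr V) (u : V) : D.Walk' 0 u u :=
  ⟨fun _ => u, rfl, rfl, by omega⟩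

lemma ddist_self (D : Digr V) (u : V) : D.ddist u u = 0 :=
  Nat.le_zero.mp (D.ddist_le' (D.walk'_refl u))

/-- prepend an edge -/
lemma walk'_cons (D : Digr V) {n : ℕ} {u w v : V} (ha : D.Adj u w)
    (h : D.Walk' n w v) : D.Walk' (n+1) u v := by
  obtain ⟨g, h0, hl, hs⟩ := h
  refine ⟨fun i => if i = 0 then u else g (i - 1), by simp, by simp [hl], ?_⟩
  intro i hi
  rcases Nat.eq_zero_or_pos i with rfl | hpos
  · simpa [h0] using ha
  · have e : i - 1 + 1 = i := by omega
    have := hs (i-1) (by omega)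
    simp only [if_neg (by omega : ¬ i = 0), if_neg (by omega : ¬ i + 1 = 0)]
    rw [e] at this
    simpa [Nat.add_sub_cancel] using this

/-- shorten a lazy walk -/
lemma walk'_of_lazy (D : Digr V) : ∀ (n : ℕ) (u v : V),
    (∃ f : ℕ → V, f 0 = u ∧ f n = v ∧
      ∀ i < n, f i = f (i+1) ∨ D.Adj (f i) (f (i+1))) →
    ∃ m ≤ n, D.Walk' m u v := by
  intro n
  induction n with
  | zero =>
    rintro u v ⟨f, h0, hl, -⟩
    exact ⟨0, le_refl _, by rw [← h0, hl]; exact D.walk'_refl v⟩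
  | succ n ih =>
    rintro u v ⟨f, h0, hl, hs⟩
    obtain ⟨m, hm, hw⟩ := ih (f 1) v ⟨fun i => f (i+1), rfl, hl, fun i hi => hs (i+1) (by omega)⟩
    rcases hs 0 (by omega) with he | ha
    · exact ⟨m, by omega, by rwa [← h0, he]⟩
    · exact ⟨m+1, by omega, D.walk'_cons (h0 ▸ ha) hw⟩

/-- strong product walk from component walks -/
lemma walk'_strongProd (D₁ : Digr V) (D₂ : Digr W) {n₁ n₂ : ℕ} {u x : V} {v y : W}
    (h1 : D₁.Walk' n₁ u x) (h2 : D₂.Walk' n₂ v y) :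
    (D₁.strongProd D₂).Walk' (max n₁ n₂) (u, v) (x, y) := by
  obtain ⟨f, f0, fl, fs⟩ := h1
  obtain ⟨g, g0, gl, gs⟩ := h2
  refine ⟨fun i => (f (min i n₁), g (min i n₂)), by simp [f0, g0], by simp [fl, gl], ?_⟩
  intro i hi
  rcases lt_or_ge i n₁ with hi1 | hi1 <;> rcases lt_or_ge i n₂ with hi2 | hi2
  · have e1 : min i n₁ = i := by omega
    have e2 : min (i+1) n₁ = i+1 := by omega
    have e3 : min i n₂ = i := by omega
    have e4 : min (i+1) n₂ = i+1 := by omega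
    exact Or.inr (Or.inr ⟨by simp only [e1, e2]; exact fs i hi1,
      by simp only [e3, e4]; exact gs i hi2⟩)
  · have e1 : min i n₁ = i := by omega
    have e2 : min (i+1) n₁ = i+1 := by omega
    have e3 : min i n₂ = n₂ := by omega
    have e4 : min (i+1) n₂ = n₂ := by omega
    exact Or.inl ⟨by simp only [e1, e2]; exact fs i hi1, by simp only [e3, e4]⟩
  · have e1 : min i n₁ = n₁ := by omega
    have e2 : min (i+1) n₁ = n₁ := by omega
    have e3 : min i n₂ = i := by omega
    have e4 : min (i+1) n₂ = i+1 := by omega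
    exact Or.inr (Or.inl ⟨by simp only [e1, e2], by simp only [e3, e4]; exact gs i hi2⟩)
  · omega

/-- projections of a product walk are lazy walks, so shortenable -/
lemma proj_of_walk'_strongProd (D₁ : Digr V) (D₂ : Digr W) {n : ℕ}
    {u x : V} {v y : W}
    (h : (D₁.strongProd D₂).Walk' n (u, v) (x, y)) :
    (∃ m ≤ n, D₁.Walk' m u x) ∧ (∃ m ≤ n, D₂.Walk' m v y) := by
  obtain ⟨f, f0, fl, fs⟩ := h
  constructor
  · refine D₁.walk'_of_lazy n u x ⟨fun i => (f i).1, by simp [f0], by simp [fl], ?_⟩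
    intro i hi
    rcases fs i hi with ⟨h, -⟩ | ⟨h, -⟩ | ⟨h, -⟩
    · exact Or.inr h
    · exact Or.inl h
    · exact Or.inr h
  · refine D₂.walk'_of_lazy n v y ⟨fun i => (f i).2, by simp [f0], by simp [fl], ?_⟩
    intro i hi
    rcases fs i hi with ⟨-, h⟩ | ⟨-, h⟩ | ⟨-, h⟩
    · exact Or.inl h
    · exact Or.inr h
    · exact Or.inr h

lemma strongProd_reaches (D₁ : Digr V) (D₂ : Digr W)
    (h₁ : D₁.StronglyConnected) (h₂ : D₂.StronglyConnected) :
    (D₁.strongProd D₂).StronglyConnected := by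
  rintro ⟨u, v⟩ ⟨x, y⟩
  have := (D₁.strongProd D₂).fin_of_walk'
    (D₁.walk'_strongProd D₂ (D₁.walk'_ddist (h₁ u x)) (D₂.walk'_ddist (h₂ v y)))
  exact ⟨_, this⟩

lemma ddist_strongProd (D₁ : Digr V) (D₂ : Digr W)
    (h₁ : D₁.StronglyConnected) (h₂ : D₂.StronglyConnected)
    (u x : V) (v y : W) :
    (D₁.strongProd D₂).ddist (u, v) (x, y) = max (D₁.ddist u x) (D₂.ddist v y) := by
  apply le_antisymm
  · exact (D₁.strongProd D₂).ddist_le'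
      (D₁.walk'_strongProd D₂ (D₁.walk'_ddist (h₁ u x)) (D₂.walk'_ddist (h₂ v y)))
  · have hw := (D₁.strongProd D₂).walk'_ddist
      (D₁.strongProd_reaches D₂ h₁ h₂ (u, v) (x, y))
    obtain ⟨⟨m1, hm1, hw1⟩, ⟨m2, hm2, hw2⟩⟩ := D₁.proj_of_walk'_strongProd D₂ hw
    exact max_le (le_trans (D₁.ddist_le' hw1) hm1) (le_trans (D₂.ddist_le' hw2) hm2)


lemma mdist_strongProd (D₁ : Digr V) (D₂ : Digr W)
    (h₁ : D₁.StronglyConnected) (h₂ : D₂.StronglyConnected)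
    (u x : V) (v y : W) :
    (D₁.strongProd D₂).mdist (u, v) (x, y) = max (D₁.mdist u x) (D₂.mdist v y) := by
  unfold mdist
  rw [D₁.ddist_strongProd D₂ h₁ h₂, D₁.ddist_strongProd D₂ h₁ h₂]
  omega

lemma mdist_le_ecc [Fintype V] (D : Digr V) (u v : V) : D.mdist u v ≤ D.ecc u :=
  Finset.le_sup (Finset.mem_univ v)

lemma mdist_self (D : Digr V) (u : V) : D.mdist u u = 0 := by
  simp [mdist, ddist_self]

lemma ecc_strongProd [Fintype V] [Fintype W] (D₁ : Digr V) (D₂ : Digr W)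
    (h₁ : D₁.StronglyConnected) (h₂ : D₂.StronglyConnected)
    (u : V) (v : W) :
    (D₁.strongProd D₂).ecc (u, v) = max (D₁.ecc u) (D₂.ecc v) := by
  apply le_antisymm
  · apply Finset.sup_le
    rintro ⟨x, y⟩ -
    rw [D₁.mdist_strongProd D₂ h₁ h₂]
    exact max_le_max (D₁.mdist_le_ecc u x) (D₂.mdist_le_ecc v y)
  · apply max_le
    · apply Finset.sup_le
      intro x _
      have h := (D₁.strongProd D₂).mdist_le_ecc (u, v) (x, v)
      rw [D₁.mdist_strongProd D₂ h₁ h₂, D₂.mdist_self v] at h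
      simpa using h
    · apply Finset.sup_le
      intro y _
      have h := (D₁.strongProd D₂).mdist_le_ecc (u, v) (u, y)
      rw [D₁.mdist_strongProd D₂ h₁ h₂, D₁.mdist_self u] at h
      simpa using h

lemma rad_le_ecc [Fintype V] [Nonempty V] (D : Digr V) (u : V) : D.rad ≤ D.ecc u :=
  Finset.inf'_le _ (Finset.mem_univ u)

lemma exists_center [Fintype V] [Nonempty V] (D : Digr V) :
    ∃ u : V, D.ecc u = D.rad := by
  obtain ⟨u, -, hu⟩ := Finset.exists_mem_eq_inf' (Finset.univ_nonempty)
    (fun v : V => D.ecc v)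
  exact ⟨u, hu.symm⟩


end Digr

/-- if `rad(D₁) = rad(D₂)` then
`Ecc(D₁ ⊠ D₂) = (Ecc(D₁) × V(D₂)) ∪ (V(D₁) × Ecc(D₂))`. -/
theorem eccSet_strongProd_of_rad_eq {V W : Type*} [Fintype V] [Fintype W]
    [Nonempty V] [Nonempty W]
    (D₁ : Digr V) (D₂ : Digr W)
    (h₁ : D₁.StronglyConnected) (h₂ : D₂.StronglyConnected)
    (hr : D₁.rad = D₂.rad) :
    (D₁.strongProd D₂).eccSet =
      (D₁.eccSet ×ˢ (Set.univ : Set W)) ∪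
      ((Set.univ : Set V) ×ˢ D₂.eccSet) := by
  ext ⟨x, y⟩
  simp only [Digr.eccSet, Set.mem_setOf_eq, Set.mem_union, Set.mem_prod, Set.mem_univ,
    and_true, true_and]
  constructor
  · rintro ⟨⟨u, v⟩, he⟩
    rw [D₁.ecc_strongProd D₂ h₁ h₂, D₁.mdist_strongProd D₂ h₁ h₂] at he
    have hm1 := D₁.mdist_le_ecc u x
    have hm2 := D₂.mdist_le_ecc v y
    by_cases hc : D₁.ecc u = D₁.mdist u x
    · exact Or.inl ⟨u, hc⟩
    · exact Or.inr ⟨v, by omega⟩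
  · rintro (⟨u, hu⟩ | ⟨v, hv⟩)
    · obtain ⟨v, hv⟩ := D₂.exists_center
      refine ⟨(u, v), ?_⟩
      rw [D₁.ecc_strongProd D₂ h₁ h₂, D₁.mdist_strongProd D₂ h₁ h₂]
      have h3 := D₂.mdist_le_ecc v y
      have h4 := D₁.rad_le_ecc u
      omega
    · obtain ⟨u, hu⟩ := D₁.exists_center
      refine ⟨(u, v), ?_⟩
      rw [D₁.ecc_strongProd D₂ h₁ h₂, D₁.mdist_strongProd D₂ h₁ h₂]
      have h3 := D₁.mdist_le_ecc u x
      have h4 := D₂.rad_le_ecc v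
      omega
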